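/- Let (Ω, F, P) be a probability space with nested σ-algebras F_{m,n} satisfying ψ-mixing coefficient ψ. On the ℓ-fold product space (Ω^ℓ, F^ℓ, P^ℓ), suppose Γ ∈ F_{-∞,m₁} × F_{-∞,m₂} × ⋯ × F_{-∞,m_ℓ} and Δ ∈ F_{m₁+k₁,∞} × ⋯ × F_{m_ℓ+k_ℓ,∞}. Then |P^ℓ(Γ∩Δ) - P^ℓ(Γ)P^ℓ(Δ)| ≤ P^ℓ(Γ) P^ℓ(Δ) Σ_{i=1}^{ℓ} ψ(k_i) Π_{j=i+1}^{ℓ} (1 + ψ(k_j)). -/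

import Mathlib

/-!
Write the ψ-mixing bound for a pair of σ-algebras in integral form: `∫ f g ≤ (1 + c) ∫ f ∫ g` and
`∫ f ∫ g ≤ ∫ f g + c ∫ f ∫ g`. Both inequalities are additive and stable under monotone limits
in `f` and in `g`, so they pass from indicators to all nonnegative measurable functions; this plays
the role of the monotone class argument. For functions on `X × Y`, the bound with constant `b` on
every fibre, followed by the bound with constant `a` for the fibre integrals, gives the bound with
`1 + c = (1 + a) (1 + b)`. Peeling off one coordinate at a time, the `ℓ`-fold product satisfies it
with `1 + c = ∏ i, (1 + ψ (k i))`, that is `c = ∑ i, ψ (k i) * ∏ j > i, (1 + ψ (k j))`.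
-/

open MeasureTheory Set Finset
open scoped ENNReal

theorem Finset.prod_one_add_eq_one_add_sum_mul_prod_Ioi {ι R : Type*} [CommSemiring R] [Fintype ι]
    [LinearOrder ι] [LocallyFiniteOrderTop ι] (c : ι → R) :
    ∏ i, (1 + c i) = 1 + ∑ i, c i * ∏ j ∈ Ioi i, (1 + c j) := by
  refine (prod_one_add_ordered (ι := ιᵒᵈ) univ (c ∘ OrderDual.ofDual)).trans ?_
  congr 1
  refine sum_congr rfl fun i _ => congrArg _ (prod_congr ?_ fun _ _ => rfl)
  ext j
  simp only [Finset.mem_filter, Finset.mem_univ, true_and]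
  exact (mem_Ioi (a := OrderDual.ofDual i) (x := OrderDual.ofDual j)).symm

theorem Fin.sum_mul_prod_Ioi_succ {R : Type*} [CommSemiring R] {n : ℕ} (c : Fin (n + 1) → R) :
    ∑ i, c i * ∏ j ∈ Ioi i, (1 + c j) =
      c 0 * (1 + ∑ i : Fin n, c i.succ * ∏ j ∈ Ioi i, (1 + c j.succ)) +
        ∑ i : Fin n, c i.succ * ∏ j ∈ Ioi i, (1 + c j.succ) := by
  rw [Fin.sum_univ_succ, Fin.prod_Ioi_zero, ← Finset.prod_one_add_eq_one_add_sum_mul_prod_Ioi]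
  simp only [Fin.prod_Ioi_succ]

theorem ENNReal.ofReal_sum_mul_prod_Ioi {ι : Type*} [Fintype ι] [Preorder ι]
    [LocallyFiniteOrderTop ι] {r : ι → ℝ} (hr : ∀ i, 0 ≤ r i) :
    ENNReal.ofReal (∑ i, r i * ∏ j ∈ Ioi i, (1 + r j)) =
      ∑ i, ENNReal.ofReal (r i) * ∏ j ∈ Ioi i, (1 + ENNReal.ofReal (r j)) := by
  have hr' : ∀ j, 0 ≤ 1 + r j := fun j => by linarith [hr j]
  rw [ENNReal.ofReal_sum_of_nonneg fun i _ => mul_nonneg (hr i) (prod_nonneg fun j _ => hr' j)]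
  refine sum_congr rfl fun i _ => ?_
  rw [ENNReal.ofReal_mul (hr i), ENNReal.ofReal_prod_of_nonneg fun j _ => hr' j]
  simp_rw [ENNReal.ofReal_add zero_le_one (hr _), ENNReal.ofReal_one]

theorem ENNReal.abs_toReal_sub_le_iff {x p : ℝ≥0∞} {r : ℝ} (hx : x ≠ ⊤) (hp : p ≠ ⊤)
    (hr : 0 ≤ r) :
    |x.toReal - p.toReal| ≤ p.toReal * r ↔
      x ≤ (1 + ENNReal.ofReal r) * p ∧ p ≤ x + ENNReal.ofReal r * p := by
  have hx0 := x.toReal_nonneg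
  have hp0 := p.toReal_nonneg
  rw [← ENNReal.ofReal_toReal hx, ← ENNReal.ofReal_toReal hp, ← ENNReal.ofReal_one,
    ← ENNReal.ofReal_add zero_le_one hr, ← ENNReal.ofReal_mul (by positivity),
    ← ENNReal.ofReal_mul hr, ← ENNReal.ofReal_add hx0 (by positivity),
    ENNReal.ofReal_le_ofReal_iff (by positivity), ENNReal.ofReal_le_ofReal_iff (by positivity),
    ENNReal.toReal_ofReal hx0, ENNReal.toReal_ofReal hp0, abs_sub_le_iff]
  constructor <;> rintro ⟨h₁, h₂⟩ <;> constructor <;> linarith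

theorem MeasurableSpace.prod_mono {X Y : Type*} {m₁ m₂ : MeasurableSpace X}
    {n₁ n₂ : MeasurableSpace Y} (hm : m₁ ≤ m₂) (hn : n₁ ≤ n₂) : m₁.prod n₁ ≤ m₂.prod n₂ :=
  sup_le_sup (MeasurableSpace.comap_mono hm) (MeasurableSpace.comap_mono hn)

theorem MeasurableSpace.pi_mono {ι : Type*} {X : ι → Type*} {m₁ m₂ : ∀ i, MeasurableSpace (X i)}
    (h : ∀ i, m₁ i ≤ m₂ i) : MeasurableSpace.pi (m := m₁) ≤ MeasurableSpace.pi (m := m₂) :=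
  iSup_mono fun i => MeasurableSpace.comap_mono (h i)

theorem Measurable.lintegral_prod_right_of_le {X Y : Type*} {𝒜 : MeasurableSpace X}
    {ℬ mY : MeasurableSpace Y} (hℬ : ℬ ≤ mY) {ν : Measure Y} [SFinite ν] {f : X × Y → ℝ≥0∞}
    (hf : Measurable[𝒜.prod ℬ] f) : Measurable[𝒜] fun x => ∫⁻ y, f (x, y) ∂ν :=
  (hf.mono (MeasurableSpace.prod_mono le_rfl hℬ) le_rfl).lintegral_prod_right'

theorem MeasurableEquiv.measurable_piFinSuccAbove_symm {n : ℕ} {X : Fin (n + 1) → Type*}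
    (𝒜 : ∀ i, MeasurableSpace (X i)) {_ : ∀ i, MeasurableSpace (X i)} (i : Fin (n + 1)) :
    @Measurable _ _ ((𝒜 i).prod (MeasurableSpace.pi (m := fun j => 𝒜 (i.succAbove j))))
      (MeasurableSpace.pi (m := 𝒜)) (MeasurableEquiv.piFinSuccAbove X i).symm :=
  @MeasurableEquiv.measurable_invFun _ _ (MeasurableSpace.pi (m := 𝒜))
    ((𝒜 i).prod (MeasurableSpace.pi (m := fun j => 𝒜 (i.succAbove j))))
    (@MeasurableEquiv.piFinSuccAbove _ X 𝒜 i)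

section

variable {Ω : Type*} {𝒜 ℬ mΩ : MeasurableSpace Ω} {μ : Measure Ω} {c : ℝ≥0∞}
  {f f' g : Ω → ℝ≥0∞}

/-- The two halves of `|μ (A ∩ B) - μ A * μ B| ≤ c * μ A * μ B` for `f = 1_A`, `g = 1_B`, written
without subtraction so that they make sense in `ℝ≥0∞`. -/
def PsiBound (μ : Measure Ω) (c : ℝ≥0∞) (f g : Ω → ℝ≥0∞) : Prop :=
  ∫⁻ x, f x * g x ∂μ ≤ (1 + c) * ((∫⁻ x, f x ∂μ) * ∫⁻ x, g x ∂μ) ∧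
    (∫⁻ x, f x ∂μ) * ∫⁻ x, g x ∂μ ≤ ∫⁻ x, f x * g x ∂μ + c * ((∫⁻ x, f x ∂μ) * ∫⁻ x, g x ∂μ)

theorem PsiBound.symm (h : PsiBound μ c f g) : PsiBound μ c g f := by
  simp only [PsiBound, mul_comm (g _), mul_comm (∫⁻ x, g x ∂μ)] at h ⊢
  exact h

theorem PsiBound.const_mul (a : ℝ≥0∞) (hf : Measurable f) (hg : Measurable g)
    (h : PsiBound μ c f g) : PsiBound μ c (fun x => a * f x) g := by
  have hfg : ∫⁻ x, a * f x * g x ∂μ = a * ∫⁻ x, f x * g x ∂μ := by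
    simp_rw [mul_assoc]
    exact lintegral_const_mul a (hf.mul hg)
  simp only [PsiBound, hfg, lintegral_const_mul a hf]
  constructor
  · calc a * ∫⁻ x, f x * g x ∂μ ≤ a * ((1 + c) * ((∫⁻ x, f x ∂μ) * ∫⁻ x, g x ∂μ)) := by
          gcongr; exact h.1
      _ = _ := by ring
  · calc a * (∫⁻ x, f x ∂μ) * ∫⁻ x, g x ∂μ = a * ((∫⁻ x, f x ∂μ) * ∫⁻ x, g x ∂μ) := by ring
      _ ≤ a * (∫⁻ x, f x * g x ∂μ + c * ((∫⁻ x, f x ∂μ) * ∫⁻ x, g x ∂μ)) := by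
          gcongr; exact h.2
      _ = _ := by ring

theorem PsiBound.add_left (hf : Measurable f) (hg : Measurable g)
    (h : PsiBound μ c f g) (h' : PsiBound μ c f' g) : PsiBound μ c (f + f') g := by
  have hfg : ∫⁻ x, (f x + f' x) * g x ∂μ = ∫⁻ x, f x * g x ∂μ + ∫⁻ x, f' x * g x ∂μ := by
    simp_rw [add_mul]
    exact lintegral_add_left (hf.mul hg) _
  simp only [PsiBound, Pi.add_apply]
  rw [hfg, lintegral_add_left hf]
  constructor
  · calc _ ≤ (1 + c) * ((∫⁻ x, f x ∂μ) * ∫⁻ x, g x ∂μ)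
          + (1 + c) * ((∫⁻ x, f' x ∂μ) * ∫⁻ x, g x ∂μ) := add_le_add h.1 h'.1
      _ = _ := by ring
  · calc _ = (∫⁻ x, f x ∂μ) * ∫⁻ x, g x ∂μ + (∫⁻ x, f' x ∂μ) * ∫⁻ x, g x ∂μ := by ring
      _ ≤ _ := add_le_add h.2 h'.2
      _ = _ := by ring

theorem PsiBound.iSup_left {f : ℕ → Ω → ℝ≥0∞} (hf : ∀ n, Measurable (f n)) (hmono : Monotone f)
    (hg : Measurable g) (h : ∀ n, PsiBound μ c (f n) g) :
    PsiBound μ c (fun x => ⨆ n, f n x) g := by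
  simp only [PsiBound]
  simp_rw [ENNReal.iSup_mul]
  rw [lintegral_iSup (f := fun n x => f n x * g x) (fun n => (hf n).mul hg)
      fun i j hij x => mul_le_mul_left (hmono hij x) _,
    lintegral_iSup hf hmono, ENNReal.iSup_mul]
  constructor
  · exact iSup_le fun n => (h n).1.trans
      (by gcongr; exact le_iSup (fun n => (∫⁻ x, f n x ∂μ) * ∫⁻ x, g x ∂μ) n)
  · refine iSup_le fun n => (h n).2.trans ?_
    gcongr
    · exact le_iSup (fun n => ∫⁻ x, f n x * g x ∂μ) n
    · exact le_iSup (fun n => (∫⁻ x, f n x ∂μ) * ∫⁻ x, g x ∂μ) n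

theorem PsiBound.of_indicator_left (h𝒜 : 𝒜 ≤ mΩ) (hg : Measurable g)
    (h : ∀ A, MeasurableSet[𝒜] A → PsiBound μ c (A.indicator 1) g)
    (hf : Measurable[𝒜] f) : PsiBound μ c f g := by
  refine @Measurable.ennreal_induction Ω 𝒜 (fun f => PsiBound μ c f g) ?_ ?_ ?_ f hf
  · intro a A hA
    have : (A.indicator fun _ => a) = fun x => a * A.indicator 1 x := by
      ext x; by_cases hx : x ∈ A <;> simp [hx]
    rw [this]
    exact (h A hA).const_mul a (measurable_one.indicator (h𝒜 _ hA)) hg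
  · intro f f' _ hf _ h h'
    exact h.add_left (hf.mono h𝒜 le_rfl) hg h'
  · intro f hf hmono h
    exact PsiBound.iSup_left (fun n => (hf n).mono h𝒜 le_rfl) hmono hg h

def PsiMixing (μ : Measure Ω) (𝒜 ℬ : MeasurableSpace Ω) (c : ℝ≥0∞) : Prop :=
  ∀ f g : Ω → ℝ≥0∞, Measurable[𝒜] f → Measurable[ℬ] g → PsiBound μ c f g

theorem psiBound_indicator_one_iff {A B : Set Ω} (hA : MeasurableSet A) (hB : MeasurableSet B) :
    PsiBound μ c (A.indicator 1) (B.indicator 1) ↔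
      μ (A ∩ B) ≤ (1 + c) * (μ A * μ B) ∧ μ A * μ B ≤ μ (A ∩ B) + c * (μ A * μ B) := by
  have hAB : ∫⁻ x, A.indicator 1 x * B.indicator 1 x ∂μ = μ (A ∩ B) := by
    rw [← lintegral_indicator_one (hA.inter hB), inter_indicator_one]
    rfl
  rw [PsiBound, hAB, lintegral_indicator_one hA, lintegral_indicator_one hB]

theorem PsiMixing.of_sets (h𝒜 : 𝒜 ≤ mΩ) (hℬ : ℬ ≤ mΩ)
    (h : ∀ A B, MeasurableSet[𝒜] A → MeasurableSet[ℬ] B →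
      PsiBound μ c (A.indicator 1) (B.indicator 1)) :
    PsiMixing μ 𝒜 ℬ c := by
  intro f g hf hg
  refine PsiBound.of_indicator_left h𝒜 (hg.mono hℬ le_rfl) (fun A hA => ?_) hf
  exact (PsiBound.of_indicator_left hℬ (measurable_one.indicator (h𝒜 _ hA))
    (fun B hB => (h A B hA hB).symm) hg).symm

theorem PsiMixing.of_measurePreserving {Y : Type*} {𝒜' ℬ' mY : MeasurableSpace Y}
    {ν : Measure Y} {φ : Y → Ω} (hφ : MeasurePreserving φ ν μ) (h𝒜 : 𝒜 ≤ mΩ) (hℬ : ℬ ≤ mΩ)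
    (hφ𝒜 : @Measurable Y Ω 𝒜' 𝒜 φ) (hφℬ : @Measurable Y Ω ℬ' ℬ φ)
    (h : PsiMixing ν 𝒜' ℬ' c) : PsiMixing μ 𝒜 ℬ c := by
  intro f g hf hg
  have hf' : Measurable f := hf.mono h𝒜 le_rfl
  have hg' : Measurable g := hg.mono hℬ le_rfl
  have := h (f ∘ φ) (g ∘ φ) (hf.comp hφ𝒜) (hg.comp hφℬ)
  rwa [PsiBound, Function.comp_def, Function.comp_def, hφ.lintegral_comp hf', hφ.lintegral_comp hg',
    hφ.lintegral_comp (f := fun x => f x * g x) (hf'.mul hg')] at this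

variable [IsFiniteMeasure μ] in
theorem psiBound_indicator_one_of_abs_div_sub_one_le {A B : Set Ω} (hA : MeasurableSet A)
    (hB : MeasurableSet B) {r : ℝ} (hr : 0 ≤ r)
    (h : (μ A).toReal * (μ B).toReal ≠ 0 →
      |(μ (A ∩ B)).toReal / ((μ A).toReal * (μ B).toReal) - 1| ≤ r) :
    PsiBound μ (ENNReal.ofReal r) (A.indicator 1) (B.indicator 1) := by
  rw [psiBound_indicator_one_iff hA hB, ← ENNReal.abs_toReal_sub_le_iff (measure_ne_top _ _)
    (ENNReal.mul_ne_top (measure_ne_top _ _) (measure_ne_top _ _)) hr, ENNReal.toReal_mul]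
  by_cases hp : (μ A).toReal * (μ B).toReal = 0
  · have hA' : (μ (A ∩ B)).toReal ≤ (μ A).toReal :=
      ENNReal.toReal_mono (measure_ne_top _ _) (measure_mono inter_subset_left)
    have hB' : (μ (A ∩ B)).toReal ≤ (μ B).toReal :=
      ENNReal.toReal_mono (measure_ne_top _ _) (measure_mono inter_subset_right)
    have hAB : (μ (A ∩ B)).toReal = 0 := by
      rcases mul_eq_zero.1 hp with h0 | h0 <;> linarith [(μ (A ∩ B)).toReal_nonneg]
    simp [hp, hAB]
  · have hpos : 0 < (μ A).toReal * (μ B).toReal := lt_of_le_of_ne (by positivity) (Ne.symm hp)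
    calc |(μ (A ∩ B)).toReal - (μ A).toReal * (μ B).toReal|
        = |(μ (A ∩ B)).toReal / ((μ A).toReal * (μ B).toReal) - 1| *
            ((μ A).toReal * (μ B).toReal) := by
          rw [div_sub_one hp, abs_div, abs_of_pos hpos, div_mul_cancel₀ _ hpos.ne']
      _ ≤ r * ((μ A).toReal * (μ B).toReal) := by gcongr; exact h hp
      _ = _ := mul_comm _ _

end

section

variable {X Y : Type*} {𝒜₁ ℬ₁ mX : MeasurableSpace X} {𝒜₂ ℬ₂ mY : MeasurableSpace Y}
  {μ : Measure X} {ν : Measure Y} [SFinite ν] {a b : ℝ≥0∞}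

theorem PsiMixing.prod (h𝒜₁ : 𝒜₁ ≤ mX) (hℬ₁ : ℬ₁ ≤ mX) (h𝒜₂ : 𝒜₂ ≤ mY) (hℬ₂ : ℬ₂ ≤ mY)
    (hμ : PsiMixing μ 𝒜₁ ℬ₁ a) (hν : PsiMixing ν 𝒜₂ ℬ₂ b) :
    PsiMixing (μ.prod ν) (𝒜₁.prod 𝒜₂) (ℬ₁.prod ℬ₂) (a * (1 + b) + b) := by
  intro f g hf hg
  have hfm : Measurable f := hf.mono (MeasurableSpace.prod_mono h𝒜₁ h𝒜₂) le_rfl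
  have hgm : Measurable g := hg.mono (MeasurableSpace.prod_mono hℬ₁ hℬ₂) le_rfl
  set φ := fun x => ∫⁻ y, f (x, y) ∂ν
  set γ := fun x => ∫⁻ y, g (x, y) ∂ν
  have hφ : Measurable[𝒜₁] φ := hf.lintegral_prod_right_of_le h𝒜₂
  have hγ : Measurable[ℬ₁] γ := hg.lintegral_prod_right_of_le hℬ₂
  have hφγ : Measurable fun x => φ x * γ x := (hφ.mono h𝒜₁ le_rfl).mul (hγ.mono hℬ₁ le_rfl)
  have hsection : ∀ x, PsiBound ν b (fun y => f (x, y)) (fun y => g (x, y)) := fun x =>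
    hν _ _ (hf.comp (@measurable_prodMk_left _ _ 𝒜₁ 𝒜₂ x))
      (hg.comp (@measurable_prodMk_left _ _ ℬ₁ ℬ₂ x))
  have hX : PsiBound μ a φ γ := hμ φ γ hφ hγ
  have hupper : ∫⁻ x, ∫⁻ y, f (x, y) * g (x, y) ∂ν ∂μ ≤ (1 + b) * ∫⁻ x, φ x * γ x ∂μ :=
    (lintegral_mono fun x => (hsection x).1).trans_eq (lintegral_const_mul _ hφγ)
  have hlower : ∫⁻ x, φ x * γ x ∂μ ≤
      ∫⁻ x, ∫⁻ y, f (x, y) * g (x, y) ∂ν ∂μ + b * ∫⁻ x, φ x * γ x ∂μ := by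
    refine (lintegral_mono fun x => (hsection x).2).trans_eq ?_
    have hinner : Measurable fun x => ∫⁻ y, f (x, y) * g (x, y) ∂ν :=
      (hfm.mul hgm).lintegral_prod_right'
    exact (lintegral_add_left hinner _).trans (by rw [lintegral_const_mul _ hφγ])
  rw [PsiBound, lintegral_prod _ hfm.aemeasurable, lintegral_prod _ hgm.aemeasurable,
    lintegral_prod (fun z => f z * g z) (hfm.mul hgm).aemeasurable]
  constructor
  · calc _ ≤ (1 + b) * ∫⁻ x, φ x * γ x ∂μ := hupper
      _ ≤ (1 + b) * ((1 + a) * ((∫⁻ x, φ x ∂μ) * ∫⁻ x, γ x ∂μ)) := by gcongr; exact hX.1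
      _ = _ := by ring
  · calc _ ≤ ∫⁻ x, φ x * γ x ∂μ + a * ((∫⁻ x, φ x ∂μ) * ∫⁻ x, γ x ∂μ) := hX.2
      _ ≤ ∫⁻ x, ∫⁻ y, f (x, y) * g (x, y) ∂ν ∂μ + b * ∫⁻ x, φ x * γ x ∂μ
          + a * ((∫⁻ x, φ x ∂μ) * ∫⁻ x, γ x ∂μ) := by gcongr
      _ ≤ ∫⁻ x, ∫⁻ y, f (x, y) * g (x, y) ∂ν ∂μ
          + b * ((1 + a) * ((∫⁻ x, φ x ∂μ) * ∫⁻ x, γ x ∂μ))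
          + a * ((∫⁻ x, φ x ∂μ) * ∫⁻ x, γ x ∂μ) := by gcongr; exact hX.1
      _ = _ := by ring

end

theorem PsiMixing.pi {n : ℕ} {X : Fin n → Type*} {𝒜 ℬ m : ∀ i, MeasurableSpace (X i)}
    {μ : ∀ i, Measure (X i)} [∀ i, SigmaFinite (μ i)] {c : Fin n → ℝ≥0∞}
    (h𝒜 : ∀ i, 𝒜 i ≤ m i) (hℬ : ∀ i, ℬ i ≤ m i) (h : ∀ i, PsiMixing (μ i) (𝒜 i) (ℬ i) (c i)) :
    PsiMixing (Measure.pi μ) (MeasurableSpace.pi (m := 𝒜)) (MeasurableSpace.pi (m := ℬ))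
      (∑ i, c i * ∏ j ∈ Ioi i, (1 + c j)) := by
  induction n with
  | zero =>
    intro f g hf hg
    have hf' : Measurable f := hf.mono (MeasurableSpace.pi_mono h𝒜) le_rfl
    have hg' : Measurable g := hg.mono (MeasurableSpace.pi_mono hℬ) le_rfl
    rw [PsiBound, Measure.pi_of_empty μ, lintegral_dirac' _ hf', lintegral_dirac' _ hg',
      lintegral_dirac' _ (f := fun x => f x * g x) (hf'.mul hg')]
    simp
  | succ n ih =>
    have htail := ih (X := fun j => X j.succ) (fun j => h𝒜 j.succ) (fun j => hℬ j.succ)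
      (fun j => h j.succ)
    have hprod := (h 0).prod (h𝒜 0) (hℬ 0) (MeasurableSpace.pi_mono fun j => h𝒜 j.succ)
      (MeasurableSpace.pi_mono fun j => hℬ j.succ) htail
    rw [Fin.sum_mul_prod_Ioi_succ]
    exact hprod.of_measurePreserving (measurePreserving_piFinSuccAbove μ 0).symm
      (MeasurableSpace.pi_mono h𝒜) (MeasurableSpace.pi_mono hℬ)
      (MeasurableEquiv.measurable_piFinSuccAbove_symm 𝒜 0)
      (MeasurableEquiv.measurable_piFinSuccAbove_symm ℬ 0)

theorem stmt9_general {Ω : Type*} [mΩ : MeasurableSpace Ω] (P : Measure Ω) [IsProbabilityMeasure P]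
    (F : EReal → EReal → MeasurableSpace Ω)
    (hsub : ∀ m n : EReal, F m n ≤ mΩ)
    (ψ : ℕ → ℝ)
    (hmix : ∀ (r : ℤ) (j : ℕ) (A B : Set Ω),
      MeasurableSet[F ⊥ ((r : ℝ) : EReal)] A →
      MeasurableSet[F ((((r + j : ℤ)) : ℝ) : EReal) ⊤] B →
      (P A).toReal * (P B).toReal ≠ 0 →
      |(P (A ∩ B)).toReal / ((P A).toReal * (P B).toReal) - 1| ≤ ψ j)
    (ℓ : ℕ) (m : Fin ℓ → ℤ) (k : Fin ℓ → ℕ)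
    (Γ Δ : Set (Fin ℓ → Ω))
    (hΓ : MeasurableSet[@MeasurableSpace.pi (Fin ℓ) (fun _ => Ω)
      (fun i => F ⊥ (((m i : ℤ) : ℝ) : EReal))] Γ)
    (hΔ : MeasurableSet[@MeasurableSpace.pi (Fin ℓ) (fun _ => Ω)
      (fun i => F ((((m i + k i : ℤ)) : ℝ) : EReal) ⊤)] Δ) :
    |((Measure.pi fun _ : Fin ℓ => P) (Γ ∩ Δ)).toReal -
        ((Measure.pi fun _ : Fin ℓ => P) Γ).toReal * ((Measure.pi fun _ : Fin ℓ => P) Δ).toReal| ≤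
      ((Measure.pi fun _ : Fin ℓ => P) Γ).toReal * ((Measure.pi fun _ : Fin ℓ => P) Δ).toReal *
        ∑ i : Fin ℓ, ψ (k i) * ∏ j ∈ Finset.Ioi i, (1 + ψ (k j)) := by
  have hψ : ∀ j, 0 ≤ ψ j := fun j => by
    simpa using hmix 0 j univ univ MeasurableSet.univ MeasurableSet.univ (by simp)
  have hmixing : ∀ i, PsiMixing P (F ⊥ (m i : ℝ)) (F ((m i + k i : ℤ) : ℝ) ⊤)
      (ENNReal.ofReal (ψ (k i))) := fun i =>
    PsiMixing.of_sets (hsub _ _) (hsub _ _) fun A B hA hB =>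
      psiBound_indicator_one_of_abs_div_sub_one_le (hsub _ _ _ hA) (hsub _ _ _ hB) (hψ _)
        (hmix _ _ A B hA hB)
  have key := PsiMixing.pi (fun _ => hsub _ _) (fun _ => hsub _ _) hmixing
    (Γ.indicator 1) (Δ.indicator 1) (measurable_const.indicator hΓ) (measurable_const.indicator hΔ)
  have hS : 0 ≤ ∑ i : Fin ℓ, ψ (k i) * ∏ j ∈ Finset.Ioi i, (1 + ψ (k j)) :=
    sum_nonneg fun i _ => mul_nonneg (hψ _) (prod_nonneg fun j _ => by linarith [hψ (k j)])
  rwa [psiBound_indicator_one_iff (MeasurableSpace.pi_mono (fun _ => hsub _ _) _ hΓ)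
      (MeasurableSpace.pi_mono (fun _ => hsub _ _) _ hΔ),
    ← ENNReal.ofReal_sum_mul_prod_Ioi (fun i => hψ (k i)),
    ← ENNReal.abs_toReal_sub_le_iff (measure_ne_top _ _)
      (ENNReal.mul_ne_top (measure_ne_top _ _) (measure_ne_top _ _)) hS,
    ENNReal.toReal_mul] at key

theorem stmt9 {Ω : Type*} [mΩ : MeasurableSpace Ω] (P : Measure Ω) [IsProbabilityMeasure P]
    (F : EReal → EReal → MeasurableSpace Ω)
    (hsub : ∀ m n : EReal, F m n ≤ mΩ)
    (hnested : ∀ m n m₁ n₁ : EReal, m₁ ≤ m → n ≤ n₁ → F m n ≤ F m₁ n₁)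
    (ψ : ℕ → ℝ) (hψ : ∀ j, 0 ≤ ψ j)
    (hmix : ∀ (r : ℤ) (j : ℕ) (A B : Set Ω),
      MeasurableSet[F ⊥ ((r : ℝ) : EReal)] A →
      MeasurableSet[F ((((r + j : ℤ)) : ℝ) : EReal) ⊤] B →
      (P A).toReal * (P B).toReal ≠ 0 →
      |(P (A ∩ B)).toReal / ((P A).toReal * (P B).toReal) - 1| ≤ ψ j)
    (ℓ : ℕ) (m : Fin ℓ → ℤ) (k : Fin ℓ → ℕ)
    (Γ Δ : Set (Fin ℓ → Ω))
    (hΓ : MeasurableSet[@MeasurableSpace.pi (Fin ℓ) (fun _ => Ω)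
      (fun i => F ⊥ (((m i : ℤ) : ℝ) : EReal))] Γ)
    (hΔ : MeasurableSet[@MeasurableSpace.pi (Fin ℓ) (fun _ => Ω)
      (fun i => F ((((m i + k i : ℤ)) : ℝ) : EReal) ⊤)] Δ) :
    |((Measure.pi fun _ : Fin ℓ => P) (Γ ∩ Δ)).toReal -
        ((Measure.pi fun _ : Fin ℓ => P) Γ).toReal * ((Measure.pi fun _ : Fin ℓ => P) Δ).toReal| ≤
      ((Measure.pi fun _ : Fin ℓ => P) Γ).toReal * ((Measure.pi fun _ : Fin ℓ => P) Δ).toReal *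
        ∑ i : Fin ℓ, ψ (k i) * ∏ j ∈ Finset.Ioi i, (1 + ψ (k j)) :=
  stmt9_general (mΩ := mΩ) P F hsub ψ hmix ℓ m k Γ Δ hΓ hΔ
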